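/- Let α be an irrational number not equivalent to (1+√5)/2, whose continued fraction expansion contains for infinitely many n the pattern a_{n−2} = a_{n−1} = 1, aₙ = 3, a_{n+1} = a_{n+2} = a_{n+3} = a_{n+4} = a_{n+5} = 1. Then 𝔨(α) ≤ 4/((√21+1)/10 + (√21+943)/262) = 0.958087⁺; in particular 𝔨(α) < 164/(13√173). -/

import Mathlib

open Filter

/-- The tails `αₙ = [aₙ; aₙ₊₁, …]` of the continued fraction of `α`. -/
noncomputable def cfTail (α : ℝ) : ℕ → ℝ
  | 0 => α
  | n + 1 => (Int.fract (cfTail α n))⁻¹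

/-- The partial quotients `aₙ` of the continued fraction of `α`. -/
noncomputable def cfDigit (α : ℝ) (n : ℕ) : ℤ := ⌊cfTail α n⌋

/-- Value `[a; b, c, …]` of a finite continued fraction given by a list. -/
noncomputable def finCF : List ℤ → ℝ
  | [] => 0
  | a :: l => (a : ℝ) + (finCF l)⁻¹

/-- `α*ₙ = [0; aₙ, aₙ₋₁, …, a₁]`. -/
noncomputable def cfStar (α : ℝ) (n : ℕ) : ℝ :=
  (finCF (((List.range' 1 n).reverse).map (cfDigit α)))⁻¹

/-- Numerators `pₙ` of the convergents of `α`. -/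
noncomputable def cfNum (α : ℝ) : ℕ → ℤ
  | 0 => cfDigit α 0
  | 1 => cfDigit α 1 * cfDigit α 0 + 1
  | n + 2 => cfDigit α (n + 2) * cfNum α (n + 1) + cfNum α n

/-- Denominators `qₙ` of the convergents of `α`. -/
noncomputable def cfDen (α : ℝ) : ℕ → ℤ
  | 0 => 1
  | 1 => cfDigit α 1
  | n + 2 => cfDigit α (n + 2) * cfDen α (n + 1) + cfDen α n

/-- The irrationality measure function `ψ_α^[2]` for "second best" approximations. -/
noncomputable def psi2 (α : ℝ) (t : ℝ) : ℝ :=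
  sInf { x : ℝ | ∃ p q : ℤ, 1 ≤ q ∧ (q : ℝ) ≤ t ∧
    (∀ n : ℕ, (p, q) ≠ (cfNum α n, cfDen α n)) ∧ x = |(q : ℝ) * α - (p : ℝ)| }

/-- The Diophantine constant `𝔨(α) = liminf_{t → ∞} t · ψ_α^[2](t)`. -/
noncomputable def kConst (α : ℝ) : ℝ := liminf (fun t : ℝ => t * psi2 α t) atTop

/-- Two numbers are equivalent if the tails of their continued fraction expansions
coincide: `a_{n+k} = b_{m+k}` for all `k ≥ 1`, for some positive integers `m`, `n`. -/
def CFEquiv (α β : ℝ) : Prop :=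
  ∃ n m : ℕ, 0 < n ∧ 0 < m ∧ ∀ k : ℕ, 0 < k → cfDigit α (n + k) = cfDigit β (m + k)

/-- The spectrum `𝕃₂` of values of `𝔨`. -/
def L2 : Set ℝ := { l : ℝ | ∃ α : ℝ, Irrational α ∧ l = kConst α }

/-- `κ¹ₙ(α) = (1 + α*ₙ₋₁)(αₙ − 1)/(αₙ + α*ₙ₋₁)`. -/
noncomputable def kappa1 (α : ℝ) (n : ℕ) : ℝ :=
  (1 + cfStar α (n - 1)) * (cfTail α n - 1) / (cfTail α n + cfStar α (n - 1))

/-- `κ²ₙ(α) = (1 − α*ₙ)(αₙ₊₁ + 1)/(αₙ₊₁ + α*ₙ)`. -/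
noncomputable def kappa2 (α : ℝ) (n : ℕ) : ℝ :=
  (1 - cfStar α n) * (cfTail α (n + 1) + 1) / (cfTail α (n + 1) + cfStar α n)

/-- `κ⁴ₙ(α) = 4/(αₙ + α*ₙ₋₁)`. -/
noncomputable def kappa4 (α : ℝ) (n : ℕ) : ℝ :=
  4 / (cfTail α n + cfStar α (n - 1))

/-!
Since `(2pₙ, 2qₙ)` is never a convergent, `ψ^[2](2qₙ) ≤ 2|qₙα − pₙ|`, which gives
`t ψ^[2](t) ≤ κ⁴ₙ₊₁(α)` at `t = 2qₙ`; so `𝔨(α)` is at most any bound that `κ⁴ₙ(α)` meets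
infinitely often.

At an occurrence of `1, 1, 3, 1, 1, 1, 1, 1` starting at `aₘ`, put `s = α*ₘ₋₁`. If `s ≥ 20/73`,
then `κ⁴ₘ₊₂ = 4/(αₘ₊₂ + α*ₘ₊₁)` with `αₘ₊₂ > 47/13` and `α*ₘ₊₁ = 1/(1 + 1/(1 + s)) ≥ 93/166`;
otherwise `κ⁴ₘ₋₁ = 4/(1/s + 1/αₘ)` with `1/s > 73/20` and `αₘ < 66/37`. Either way one of them is
at most `4/(47/13 + 93/166) = 0.95794…`, which is below the constant of the theorem.
-/

open Set

theorem mul_add_eq_of_eq_add_inv {z x y a P P' Q Q' : ℝ} (hy : y ≠ 0) (hx : x = a + y⁻¹)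
    (h : z * (Q' * x + Q) = P' * x + P) :
    z * ((a * Q' + Q) * y + Q') = (a * P' + P) * y + P' := by
  subst hx
  linear_combination y * h + (P' - z * Q') * mul_inv_cancel₀ hy

section ContinuedFraction

variable {α : ℝ}

theorem cfTail_eq_cfDigit_add_inv (n : ℕ) :
    cfTail α n = cfDigit α n + (cfTail α (n + 1))⁻¹ := by
  rw [cfTail, inv_inv, cfDigit, Int.floor_add_fract]

theorem cfTail_mem_Ioo_of_succ_mem {k : ℕ} {a : ℤ} {l u : ℝ} (hd : cfDigit α k = a)
    (hl : 0 < l) (h : cfTail α (k + 1) ∈ Ioo l u) :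
    cfTail α k ∈ Ioo (a + u⁻¹) (a + l⁻¹) := by
  rw [cfTail_eq_cfDigit_add_inv, hd]
  exact ⟨(add_lt_add_iff_left _).2 (inv_strictAnti₀ (hl.trans h.1) h.2),
    (add_lt_add_iff_left _).2 (inv_strictAnti₀ hl h.1)⟩

theorem cfStar_succ (n : ℕ) : cfStar α (n + 1) = (cfDigit α (n + 1) + cfStar α n)⁻¹ := by
  simp only [cfStar, List.range'_concat, List.reverse_append, List.map_cons,
    List.reverse_cons, List.reverse_nil, List.nil_append, List.singleton_append, finCF]
  ring_nf

theorem cfNum_mul_cfDen_sub_cfNum_mul_cfDen (n : ℕ) :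
    cfNum α (n + 1) * cfDen α n - cfNum α n * cfDen α (n + 1) = (-1) ^ n := by
  induction n with
  | zero => simp only [cfNum, cfDen]; ring
  | succ n ih =>
    simp only [cfNum, cfDen] at ih ⊢
    rw [pow_succ, ← ih]
    ring

theorem isCoprime_cfNum_cfDen (n : ℕ) : IsCoprime (cfNum α n) (cfDen α n) := by
  cases n with
  | zero => exact isCoprime_one_right
  | succ n =>
    refine ⟨(-1) ^ n * cfDen α n, -((-1) ^ n * cfNum α n), ?_⟩
    linear_combination (-1 : ℤ) ^ n * cfNum_mul_cfDen_sub_cfNum_mul_cfDen (α := α) n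
      + (by rw [← mul_pow]; norm_num : (-1 : ℤ) ^ n * (-1) ^ n = 1)

variable (hα : Irrational α)
include hα

theorem irrational_cfTail (n : ℕ) : Irrational (cfTail α n) := by
  induction n with
  | zero => exact hα
  | succ n ih => exact (ih.sub_intCast _).inv

theorem cfTail_mem_Ioo (n : ℕ) : cfTail α n ∈ Ioo (cfDigit α n : ℝ) (cfDigit α n + 1) :=
  ⟨(Int.floor_le _).lt_of_ne ((irrational_cfTail hα n).ne_int _).symm, Int.lt_floor_add_one _⟩

theorem one_lt_cfTail_succ (n : ℕ) : 1 < cfTail α (n + 1) :=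
  (one_lt_inv₀ (Int.fract_pos.2 ((irrational_cfTail hα n).ne_int _))).2 (Int.fract_lt_one _)

theorem one_le_cfDigit_succ (n : ℕ) : 1 ≤ cfDigit α (n + 1) :=
  Int.le_floor.2 (by exact_mod_cast (one_lt_cfTail_succ hα n).le)

theorem one_le_cfDen : ∀ n, 1 ≤ cfDen α n
  | 0 => le_rfl
  | 1 => one_le_cfDigit_succ hα 0
  | n + 2 => by
    have := one_le_cfDen n
    have := one_le_cfDen (n + 1)
    have := one_le_cfDigit_succ hα (n + 1)
    show 1 ≤ cfDigit α (n + 2) * cfDen α (n + 1) + cfDen α n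
    nlinarith

theorem natCast_le_cfDen_succ (n : ℕ) : (n : ℤ) ≤ cfDen α (n + 1) := by
  induction n with
  | zero => exact zero_le_one.trans (one_le_cfDen hα 1)
  | succ n ih =>
    have := one_le_cfDen hα n
    have := one_le_cfDigit_succ hα (n + 1)
    show (n : ℤ) + 1 ≤ cfDigit α (n + 2) * cfDen α (n + 1) + cfDen α n
    nlinarith

theorem cfStar_succ_eq_div (n : ℕ) : cfStar α (n + 1) = cfDen α n / cfDen α (n + 1) := by
  induction n with
  | zero => simp [cfStar, finCF, cfDen]
  | succ n ih =>
    have hq : (0 : ℝ) < cfDen α (n + 1) := by exact_mod_cast one_le_cfDen hα (n + 1)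
    rw [cfStar_succ, ih]
    simp only [cfDen, Int.cast_add, Int.cast_mul]
    field_simp

theorem mul_cfDen_mul_cfTail_add (n : ℕ) :
    α * (cfDen α (n + 1) * cfTail α (n + 2) + cfDen α n)
      = cfNum α (n + 1) * cfTail α (n + 2) + cfNum α n := by
  have hne (k : ℕ) : cfTail α (k + 1) ≠ 0 := (one_pos.trans (one_lt_cfTail_succ hα k)).ne'
  induction n with
  | zero =>
    have e : α = cfDigit α 0 + (cfTail α 1)⁻¹ := cfTail_eq_cfDigit_add_inv 0
    have h0 : α * (1 * cfTail α 1 + 0) = cfDigit α 0 * cfTail α 1 + 1 := by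
      linear_combination cfTail α 1 * e + mul_inv_cancel₀ (hne 0)
    have := mul_add_eq_of_eq_add_inv (hne 1) (cfTail_eq_cfDigit_add_inv 1) h0
    simp only [cfNum, cfDen]
    push_cast
    linear_combination this
  | succ n ih =>
    have := mul_add_eq_of_eq_add_inv (hne (n + 2)) (cfTail_eq_cfDigit_add_inv (n + 2)) ih
    simp only [cfNum, cfDen]
    push_cast
    linear_combination this

theorem abs_cfDen_mul_sub_cfNum (n : ℕ) :
    |cfDen α (n + 1) * α - cfNum α (n + 1)|
      = (cfDen α (n + 1) * cfTail α (n + 2) + cfDen α n)⁻¹ := by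
  have hD : (0 : ℝ) < cfDen α (n + 1) * cfTail α (n + 2) + cfDen α n := by
    have := one_lt_cfTail_succ hα (n + 1)
    have : (1 : ℝ) ≤ cfDen α n := by exact_mod_cast one_le_cfDen hα n
    have : (1 : ℝ) ≤ cfDen α (n + 1) := by exact_mod_cast one_le_cfDen hα (n + 1)
    positivity
  have hdet : (cfNum α (n + 1) * cfDen α n - cfNum α n * cfDen α (n + 1) : ℝ) = (-1) ^ n := by
    exact_mod_cast cfNum_mul_cfDen_sub_cfNum_mul_cfDen n
  have hprod : (cfDen α (n + 1) * α - cfNum α (n + 1))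
      * (cfDen α (n + 1) * cfTail α (n + 2) + cfDen α n) = -(-1) ^ n := by
    linear_combination cfDen α (n + 1) * mul_cfDen_mul_cfTail_add hα n - hdet
  refine eq_inv_of_mul_eq_one_left ?_
  rw [← abs_of_pos hD, ← abs_mul, hprod]
  simp

end ContinuedFraction

section SecondBestApproximation

variable {α : ℝ}

theorem psi2_nonneg (t : ℝ) : 0 ≤ psi2 α t :=
  Real.sInf_nonneg (by rintro x ⟨p, q, -, -, -, rfl⟩; positivity)

theorem psi2_le {t : ℝ} {p q : ℤ} (hq : 1 ≤ q) (hqt : (q : ℝ) ≤ t)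
    (hpq : ∀ n, (p, q) ≠ (cfNum α n, cfDen α n)) : psi2 α t ≤ |q * α - p| :=
  csInf_le ⟨0, by rintro x ⟨p, q, -, -, -, rfl⟩; positivity⟩ ⟨p, q, hq, hqt, hpq, rfl⟩

theorem two_mul_ne_convergent (m n : ℕ) :
    (2 * cfNum α m, 2 * cfDen α m) ≠ (cfNum α n, cfDen α n) := by
  intro h
  obtain ⟨hp, hq⟩ := Prod.mk.inj h
  have h2 := isCoprime_cfNum_cfDen (α := α) n
  rw [← hp, ← hq] at h2
  have : IsUnit (2 : ℤ) := isCoprime_self.1 h2.of_mul_left_left.of_mul_right_left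
  norm_num [Int.isUnit_iff] at this

variable (hα : Irrational α)
include hα

theorem mul_psi2_le_kappa4 (n : ℕ) :
    2 * cfDen α (n + 1) * psi2 α (2 * cfDen α (n + 1)) ≤ kappa4 α (n + 2) := by
  have hq : (1 : ℝ) ≤ cfDen α (n + 1) := by exact_mod_cast one_le_cfDen hα (n + 1)
  have hψ : psi2 α (2 * cfDen α (n + 1)) ≤ 2 * |cfDen α (n + 1) * α - cfNum α (n + 1)| := by
    have := psi2_le (α := α) (by linarith [one_le_cfDen hα (n + 1)]) (by push_cast; rfl)
      (two_mul_ne_convergent (n + 1))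
    rwa [Int.cast_mul, Int.cast_mul, Int.cast_two, mul_assoc, ← mul_sub, abs_mul, abs_two]
      at this
  calc 2 * cfDen α (n + 1) * psi2 α (2 * cfDen α (n + 1))
      ≤ 2 * cfDen α (n + 1) * (2 * |cfDen α (n + 1) * α - cfNum α (n + 1)|) := by gcongr
    _ = kappa4 α (n + 2) := by
      rw [abs_cfDen_mul_sub_cfNum hα, kappa4, show n + 2 - 1 = n + 1 from rfl,
        cfStar_succ_eq_div hα]
      field_simp
      ring

theorem kConst_le_of_frequently_kappa4_le {c : ℝ} (h : ∃ᶠ n in atTop, kappa4 α (n + 2) ≤ c) :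
    kConst α ≤ c := by
  have hq : Tendsto (fun n : ℕ => 2 * (cfDen α (n + 1) : ℝ)) atTop atTop := by
    refine tendsto_atTop_mono (fun n => ?_) tendsto_natCast_atTop_atTop
    have : (n : ℝ) ≤ cfDen α (n + 1) := by exact_mod_cast natCast_le_cfDen_succ hα n
    have : (1 : ℝ) ≤ cfDen α (n + 1) := by exact_mod_cast one_le_cfDen hα (n + 1)
    linarith
  refine liminf_le_of_frequently_le
    (hq.frequently_map _ (fun n hn => (mul_psi2_le_kappa4 hα n).trans hn) h) ?_
  exact isBoundedUnder_of_eventually_ge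
    ((eventually_ge_atTop 0).mono fun t ht => mul_nonneg ht (psi2_nonneg t))

end SecondBestApproximation

section Pattern

variable {α : ℝ} (hα : Irrational α)
include hα

theorem cfTail_bounds_of_digits_1_1_3_1_1_1_1_1 {k : ℕ}
    (h0 : cfDigit α k = 1) (h1 : cfDigit α (k + 1) = 1) (h2 : cfDigit α (k + 2) = 3)
    (h3 : cfDigit α (k + 3) = 1) (h4 : cfDigit α (k + 4) = 1) (h5 : cfDigit α (k + 5) = 1)
    (h6 : cfDigit α (k + 6) = 1) (h7 : cfDigit α (k + 7) = 1) :
    47 / 13 < cfTail α (k + 2) ∧ cfTail α k < 66 / 37 := by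
  have t7 : cfTail α (k + 7) ∈ Ioo 1 2 := by
    simpa [h7, one_add_one_eq_two] using cfTail_mem_Ioo hα (k + 7)
  have t6 := cfTail_mem_Ioo_of_succ_mem h6 one_pos t7
  have t5 := cfTail_mem_Ioo_of_succ_mem h5 (by positivity) t6
  have t4 := cfTail_mem_Ioo_of_succ_mem h4 (by positivity) t5
  have t3 := cfTail_mem_Ioo_of_succ_mem h3 (by positivity) t4
  have t2 := cfTail_mem_Ioo_of_succ_mem h2 (by positivity) t3
  have t1 := cfTail_mem_Ioo_of_succ_mem h1 (by positivity) t2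
  have t0 := cfTail_mem_Ioo_of_succ_mem h0 (by positivity) t1
  norm_num at t2 t0
  exact ⟨t2.1, t0.2⟩

theorem kappa4_le_or_kappa4_le_of_digits {i : ℕ}
    (h3 : cfDigit α (i + 3) = 1) (h4 : cfDigit α (i + 4) = 1) (h5 : cfDigit α (i + 5) = 3)
    (h6 : cfDigit α (i + 6) = 1) (h7 : cfDigit α (i + 7) = 1) (h8 : cfDigit α (i + 8) = 1)
    (h9 : cfDigit α (i + 9) = 1) (h10 : cfDigit α (i + 10) = 1) :
    kappa4 α (i + 2) ≤ 4 / (47 / 13 + 93 / 166) ∨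
      kappa4 α (i + 5) ≤ 4 / (47 / 13 + 93 / 166) := by
  obtain ⟨hA, hx⟩ := cfTail_bounds_of_digits_1_1_3_1_1_1_1_1 hα h3 h4 h5 h6 h7 h8 h9 h10
  change 47 / 13 < cfTail α (i + 5) at hA
  set s := cfStar α (i + 2) with hs_def
  have hs : 0 < s := by
    have : (1 : ℝ) ≤ cfDen α (i + 1) := by exact_mod_cast one_le_cfDen hα (i + 1)
    have : (1 : ℝ) ≤ cfDen α (i + 2) := by exact_mod_cast one_le_cfDen hα (i + 2)
    rw [hs_def, cfStar_succ_eq_div hα]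
    positivity
  rcases lt_or_ge s (20 / 73) with hsmall | hlarge
  · left
    have hX : cfTail α (i + 2) + cfStar α (i + 1) = s⁻¹ + (cfTail α (i + 3))⁻¹ := by
      rw [hs_def, cfStar_succ (i + 1), inv_inv, cfTail_eq_cfDigit_add_inv (i + 2)]
      ring
    have hs_inv : 73 / 20 < s⁻¹ := by rw [lt_inv_comm₀ (by norm_num) hs]; linarith
    have htail_inv : 37 / 66 < (cfTail α (i + 3))⁻¹ := by
      rw [lt_inv_comm₀ (by norm_num) (by linarith [one_lt_cfTail_succ hα (i + 2)])]; linarith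
    rw [kappa4, show i + 2 - 1 = i + 1 from rfl, hX]
    exact div_le_div_of_nonneg_left (by norm_num) (by norm_num) (by linarith)
  · right
    have hY : cfStar α (i + 4) = (1 + (1 + s)⁻¹)⁻¹ := by
      rw [hs_def, cfStar_succ, cfStar_succ (i + 2), h3, h4]
      push_cast
      ring
    have hstar3 : (1 + s)⁻¹ ≤ 73 / 93 := by
      rw [inv_le_comm₀ (by linarith) (by norm_num)]; linarith
    have hstar4 : 93 / 166 ≤ (1 + (1 + s)⁻¹)⁻¹ := by
      rw [le_inv_comm₀ (by norm_num) (by positivity)]; linarith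
    rw [kappa4, show i + 5 - 1 = i + 4 from rfl, hY]
    exact div_le_div_of_nonneg_left (by norm_num) (by norm_num) (by linarith)

end Pattern

theorem stmt_17_general (α : ℝ) (hα : Irrational α)
    (hpat : ∃ᶠ n in atTop,
      cfDigit α n = 1 ∧ cfDigit α (n + 1) = 1 ∧ cfDigit α (n + 2) = 3 ∧
      cfDigit α (n + 3) = 1 ∧ cfDigit α (n + 4) = 1 ∧ cfDigit α (n + 5) = 1 ∧
      cfDigit α (n + 6) = 1 ∧ cfDigit α (n + 7) = 1) :
    kConst α ≤ 4 / ((Real.sqrt 21 + 1) / 10 + (Real.sqrt 21 + 943) / 262) ∧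
    kConst α < 164 / (13 * Real.sqrt 173) := by
  have hfreq : ∃ᶠ n in atTop, kappa4 α (n + 2) ≤ 4 / (47 / 13 + 93 / 166) := by
    refine frequently_atTop.2 fun N => ?_
    obtain ⟨m, hm, d0, d1, d2, d3, d4, d5, d6, d7⟩ := frequently_atTop.1 hpat (N + 3)
    obtain ⟨i, rfl⟩ : ∃ i, m = i + 3 := ⟨m - 3, by omega⟩
    rcases kappa4_le_or_kappa4_le_of_digits hα d0 d1 d2 d3 d4 d5 d6 d7 with h | h
    · exact ⟨i, by omega, h⟩
    · exact ⟨i + 3, by omega, h⟩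
  have hk := kConst_le_of_frequently_kappa4_le hα hfreq
  have h21 : Real.sqrt 21 ∈ Icc 4.58 4.583 :=
    ⟨Real.le_sqrt_of_sq_le (by norm_num), Real.sqrt_le_iff.2 ⟨by norm_num, by norm_num⟩⟩
  have h173 : Real.sqrt 173 < 13.16 := (Real.sqrt_lt' (by norm_num)).2 (by norm_num)
  have hc : 4 / (47 / 13 + 93 / 166) ≤
      4 / ((Real.sqrt 21 + 1) / 10 + (Real.sqrt 21 + 943) / 262) :=
    div_le_div_of_nonneg_left (by norm_num) (by positivity) (by linarith [h21.2])
  refine ⟨hk.trans hc, (hk.trans hc).trans_lt ?_⟩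
  rw [div_lt_div_iff₀ (by positivity) (by positivity)]
  linarith [h21.1]

/-- If `α` is irrational, not equivalent to `(1+√5)/2`, and contains the pattern
`1, 1, 3, 1, 1, 1, 1, 1` for infinitely many positions, then
`𝔨(α) ≤ 4/((√21+1)/10 + (√21+943)/262)`; in particular `𝔨(α) < 164/(13√173)`. -/
theorem stmt_17 (α : ℝ) (hα : Irrational α)
    (h5 : ¬ CFEquiv α ((1 + Real.sqrt 5) / 2))
    (hpat : ∃ᶠ n in atTop,
      cfDigit α n = 1 ∧ cfDigit α (n + 1) = 1 ∧ cfDigit α (n + 2) = 3 ∧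
      cfDigit α (n + 3) = 1 ∧ cfDigit α (n + 4) = 1 ∧ cfDigit α (n + 5) = 1 ∧
      cfDigit α (n + 6) = 1 ∧ cfDigit α (n + 7) = 1) :
    kConst α ≤ 4 / ((Real.sqrt 21 + 1) / 10 + (Real.sqrt 21 + 943) / 262) ∧
    kConst α < 164 / (13 * Real.sqrt 173) :=
  stmt_17_general α hα hpat
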